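/- Suppose the eight components ψ_{ς₀ς₁ς₂}(t, s_ph, s_e1, s_e2) are C¹ on an open subset of ℝ⁴ and satisfy the equal-time evolution equations there. Define j⁰ := Σ_{ς₀,ς₁,ς₂} |ψ_{ς₀ς₁ς₂}|², j¹ := Σ_{ς₁,ς₂} (|ψ_{(−1)ς₁ς₂}|² − |ψ_{(+1)ς₁ς₂}|²), j² := Σ_{ς₀,ς₂} (|ψ_{ς₀(−1)ς₂}|² − |ψ_{ς₀(+1)ς₂}|²), j³ := Σ_{ς₀,ς₁} (|ψ_{ς₀ς₁(−1)}|² − |ψ_{ς₀ς₁(+1)}|²). Then the continuity equation holds: ∂_t j⁰ + ∂_{s_ph} j¹ + ∂_{s_e1} j² + ∂_{s_e2} j³ = 0. -/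

import Mathlib

open Complex

noncomputable section

/-- Partial derivative (in coordinate `i`) of a complex-valued function on `ℝⁿ`. -/
def pdC {n : ℕ} (i : Fin n) (f : (Fin n → ℝ) → ℂ) (x : Fin n → ℝ) : ℂ :=
  fderiv ℝ f x (Pi.single i 1)

/-- Partial derivative (in coordinate `i`) of a real-valued function on `ℝⁿ`. -/
def pdR {n : ℕ} (i : Fin n) (f : (Fin n → ℝ) → ℝ) (x : Fin n → ℝ) : ℝ :=
  fderiv ℝ f x (Pi.single i 1)

/-- `j⁰`: the probability density. Coordinates on `ℝ⁴` are `(t, s_ph, s_e1, s_e2)`. -/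
def j0 (ψ : ℝ → ℝ → ℝ → (Fin 4 → ℝ) → ℂ) (x : Fin 4 → ℝ) : ℝ :=
  ∑ ς₀ ∈ ({-1, 1} : Finset ℝ), ∑ ς₁ ∈ ({-1, 1} : Finset ℝ), ∑ ς₂ ∈ ({-1, 1} : Finset ℝ),
    ‖ψ ς₀ ς₁ ς₂ x‖ ^ 2

/-- `j¹`: the photonic current. -/
def j1 (ψ : ℝ → ℝ → ℝ → (Fin 4 → ℝ) → ℂ) (x : Fin 4 → ℝ) : ℝ :=
  ∑ ς₁ ∈ ({-1, 1} : Finset ℝ), ∑ ς₂ ∈ ({-1, 1} : Finset ℝ),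
    (‖ψ (-1) ς₁ ς₂ x‖ ^ 2 - ‖ψ 1 ς₁ ς₂ x‖ ^ 2)

/-- `j²`: the current of the first electron. -/
def j2 (ψ : ℝ → ℝ → ℝ → (Fin 4 → ℝ) → ℂ) (x : Fin 4 → ℝ) : ℝ :=
  ∑ ς₀ ∈ ({-1, 1} : Finset ℝ), ∑ ς₂ ∈ ({-1, 1} : Finset ℝ),
    (‖ψ ς₀ (-1) ς₂ x‖ ^ 2 - ‖ψ ς₀ 1 ς₂ x‖ ^ 2)

/-- `j³`: the current of the second electron. -/
def j3 (ψ : ℝ → ℝ → ℝ → (Fin 4 → ℝ) → ℂ) (x : Fin 4 → ℝ) : ℝ :=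
  ∑ ς₀ ∈ ({-1, 1} : Finset ℝ), ∑ ς₁ ∈ ({-1, 1} : Finset ℝ),
    (‖ψ ς₀ ς₁ (-1) x‖ ^ 2 - ‖ψ ς₀ ς₁ 1 x‖ ^ 2)

/-! Writing `j¹, j², j³` as sums over the eight components with weights `-ς₀, -ς₁, -ς₂`, the
divergence becomes `∑_ς 2 Re((∂_t - ς₀∂_{s_ph} - ς₁∂_{s_e1} - ς₂∂_{s_e2})ψ_ς · conj ψ_ς)`.
By the evolution equations each summand is `2ω Im((ψ_{ς₀(-ς₁)ς₂} + ψ_{ς₀ς₁(-ς₂)}) · conj ψ_ς)`.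
Flipping one sign is an involution of the index set and `Im(a · conj b) = -Im(b · conj a)`, so
these mass terms cancel in pairs. -/

open ComplexConjugate

section PartialDerivatives

variable {n : ℕ} {x : Fin n → ℝ}

lemma pdR_sum {ι : Type*} {s : Finset ι} {f : ι → (Fin n → ℝ) → ℝ}
    (hf : ∀ k ∈ s, DifferentiableAt ℝ (f k) x) (i : Fin n) :
    pdR i (fun y => ∑ k ∈ s, f k y) x = ∑ k ∈ s, pdR i (f k) x := by
  simp only [pdR, fderiv_fun_sum hf, FunLike.coe_sum, Finset.sum_apply]

lemma pdR_const_mul {f : (Fin n → ℝ) → ℝ} (hf : DifferentiableAt ℝ f x) (c : ℝ) (i : Fin n) :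
    pdR i (fun y => c * f y) x = c * pdR i f x := by
  simp only [pdR, fderiv_const_mul hf, smul_apply, smul_eq_mul]

lemma pdR_norm_sq {f : (Fin n → ℝ) → ℂ} (hf : DifferentiableAt ℝ f x) (i : Fin n) :
    pdR i (fun y => ‖f y‖ ^ 2) x = 2 * (pdC i f x * conj (f x)).re := by
  simp only [pdR, pdC, hf.hasFDerivAt.norm_sq.fderiv, smul_apply, ContinuousLinearMap.comp_apply,
    coe_innerSL_apply, Complex.inner, nsmul_eq_mul, Nat.cast_ofNat]

end PartialDerivatives

lemma Finset.sum_im_mul_conj_involution {ι : Type*} {s : Finset ι} (g : ι → ι)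
    (hg_mem : ∀ a ∈ s, g a ∈ s) (hg_inv : ∀ a ∈ s, g (g a) = a) (u : ι → ℂ) :
    ∑ a ∈ s, (u (g a) * conj (u a)).im = 0 := by
  refine Finset.sum_involution (fun a _ => g a) (fun a ha => ?_) (fun a ha hne hfix => ?_)
    (fun a ha => hg_mem a ha) (fun a ha => hg_inv a ha)
  · rw [hg_inv a ha, Complex.mul_im, Complex.mul_im]
    simp only [Complex.conj_re, Complex.conj_im]
    ring
  · rw [hfix, Complex.mul_conj, Complex.ofReal_im] at hne
    exact hne rfl

lemma pdR_norm_sq_of_evolution {f : (Fin 4 → ℝ) → ℂ} {x : Fin 4 → ℝ}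
    (hf : DifferentiableAt ℝ f x) {s₀ s₁ s₂ ω : ℝ} {p q : ℂ}
    (h : pdC 0 f x - s₀ * pdC 1 f x - s₁ * pdC 2 f x - s₂ * pdC 3 f x
      + I * ω * p + I * ω * q = 0) :
    pdR 0 (‖f ·‖ ^ 2) x + pdR 1 (fun y => -s₀ * ‖f y‖ ^ 2) x
      + pdR 2 (fun y => -s₁ * ‖f y‖ ^ 2) x + pdR 3 (fun y => -s₂ * ‖f y‖ ^ 2) x
      = 2 * ω * ((p + q) * conj (f x)).im := by
  simp only [pdR_const_mul (hf.norm_sq ℝ), pdR_norm_sq hf]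
  rw [show pdC 0 f x = s₀ * pdC 1 f x + s₁ * pdC 2 f x + s₂ * pdC 3 f x - I * ω * (p + q) by
    linear_combination h]
  simp only [sub_mul, add_mul, Complex.sub_re, Complex.add_re, mul_assoc, Complex.re_ofReal_mul,
    Complex.I_mul_re, Complex.im_ofReal_mul]
  ring

def signTriples : Finset (ℝ × ℝ × ℝ) :=
  ({-1, 1} : Finset ℝ) ×ˢ ({-1, 1} : Finset ℝ) ×ˢ ({-1, 1} : Finset ℝ)

lemma sum_pm_one {M : Type*} [AddCommMonoid M] (f : ℝ → M) :
    ∑ s ∈ ({-1, 1} : Finset ℝ), f s = f (-1) + f 1 :=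
  Finset.sum_pair (by norm_num)

lemma mem_signTriples {ς : ℝ × ℝ × ℝ} : ς ∈ signTriples ↔
    ς.1 ∈ ({-1, 1} : Set ℝ) ∧ ς.2.1 ∈ ({-1, 1} : Set ℝ) ∧ ς.2.2 ∈ ({-1, 1} : Set ℝ) := by
  simp [signTriples]

lemma neg_mem_pm_one {s : ℝ} (hs : s ∈ ({-1, 1} : Set ℝ)) : -s ∈ ({-1, 1} : Set ℝ) := by
  rcases hs with rfl | rfl <;> norm_num

lemma sum_signTriples_im_flip (u : ℝ → ℝ → ℝ → ℂ) :
    ∑ ς ∈ signTriples,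
      ((u ς.1 (-ς.2.1) ς.2.2 + u ς.1 ς.2.1 (-ς.2.2)) * conj (u ς.1 ς.2.1 ς.2.2)).im = 0 := by
  have hflip₁ : ∑ ς ∈ signTriples, (u ς.1 (-ς.2.1) ς.2.2 * conj (u ς.1 ς.2.1 ς.2.2)).im = 0 :=
    Finset.sum_im_mul_conj_involution (fun ς => (ς.1, -ς.2.1, ς.2.2))
      (fun ς hς => mem_signTriples.2 <| (mem_signTriples.1 hς).imp_right
        (And.imp_left neg_mem_pm_one))
      (fun ς _ => by simp) (fun ς => u ς.1 ς.2.1 ς.2.2)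
  have hflip₂ : ∑ ς ∈ signTriples, (u ς.1 ς.2.1 (-ς.2.2) * conj (u ς.1 ς.2.1 ς.2.2)).im = 0 :=
    Finset.sum_im_mul_conj_involution (fun ς => (ς.1, ς.2.1, -ς.2.2))
      (fun ς hς => mem_signTriples.2 <| (mem_signTriples.1 hς).imp_right
        (And.imp_right neg_mem_pm_one))
      (fun ς _ => by simp) (fun ς => u ς.1 ς.2.1 ς.2.2)
  simp only [add_mul, Complex.add_im, Finset.sum_add_distrib]
  rw [hflip₁, hflip₂, add_zero]

section Currents

variable (ψ : ℝ → ℝ → ℝ → (Fin 4 → ℝ) → ℂ)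

lemma j0_eq_sum : j0 ψ = fun x => ∑ ς ∈ signTriples, ‖ψ ς.1 ς.2.1 ς.2.2 x‖ ^ 2 := by
  funext x; simp only [j0, signTriples, Finset.sum_product]

lemma j1_eq_sum : j1 ψ = fun x => ∑ ς ∈ signTriples, -ς.1 * ‖ψ ς.1 ς.2.1 ς.2.2 x‖ ^ 2 := by
  funext x
  simp only [j1, signTriples, Finset.sum_product, sum_pm_one]
  ring

lemma j2_eq_sum : j2 ψ = fun x => ∑ ς ∈ signTriples, -ς.2.1 * ‖ψ ς.1 ς.2.1 ς.2.2 x‖ ^ 2 := by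
  funext x
  simp only [j2, signTriples, Finset.sum_product, sum_pm_one]
  ring

lemma j3_eq_sum : j3 ψ = fun x => ∑ ς ∈ signTriples, -ς.2.2 * ‖ψ ς.1 ς.2.1 ς.2.2 x‖ ^ 2 := by
  funext x
  simp only [j3, signTriples, Finset.sum_product, sum_pm_one]
  ring

end Currents

theorem continuity_equation
    (ω : ℝ)
    (U : Set (Fin 4 → ℝ)) (hU : IsOpen U)
    (ψ : ℝ → ℝ → ℝ → (Fin 4 → ℝ) → ℂ)
    (hreg : ∀ ς₀ ∈ ({-1, 1} : Set ℝ), ∀ ς₁ ∈ ({-1, 1} : Set ℝ), ∀ ς₂ ∈ ({-1, 1} : Set ℝ),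
      ContDiffOn ℝ 1 (ψ ς₀ ς₁ ς₂) U)
    (heq : ∀ ς₀ ∈ ({-1, 1} : Set ℝ), ∀ ς₁ ∈ ({-1, 1} : Set ℝ), ∀ ς₂ ∈ ({-1, 1} : Set ℝ),
      ∀ x ∈ U,
        pdC 0 (ψ ς₀ ς₁ ς₂) x - (ς₀ : ℂ) * pdC 1 (ψ ς₀ ς₁ ς₂) x
          - (ς₁ : ℂ) * pdC 2 (ψ ς₀ ς₁ ς₂) x - (ς₂ : ℂ) * pdC 3 (ψ ς₀ ς₁ ς₂) x
          + Complex.I * (ω : ℂ) * ψ ς₀ (-ς₁) ς₂ x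
          + Complex.I * (ω : ℂ) * ψ ς₀ ς₁ (-ς₂) x = 0) :
    ∀ x ∈ U,
      pdR 0 (j0 ψ) x + pdR 1 (j1 ψ) x + pdR 2 (j2 ψ) x + pdR 3 (j3 ψ) x = 0 := by
  intro x hx
  have hdiff : ∀ ς ∈ signTriples, DifferentiableAt ℝ (ψ ς.1 ς.2.1 ς.2.2) x := fun ς hς => by
    obtain ⟨h₀, h₁, h₂⟩ := mem_signTriples.1 hς
    exact ((hreg _ h₀ _ h₁ _ h₂).differentiableOn one_ne_zero).differentiableAt (hU.mem_nhds hx)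
  have hweighted (c : ℝ × ℝ × ℝ → ℝ) : ∀ ς ∈ signTriples,
      DifferentiableAt ℝ (fun y => c ς * ‖ψ ς.1 ς.2.1 ς.2.2 y‖ ^ 2) x :=
    fun ς hς => ((hdiff ς hς).norm_sq ℝ).const_mul _
  have hterm : ∀ ς ∈ signTriples,
      pdR 0 (‖ψ ς.1 ς.2.1 ς.2.2 ·‖ ^ 2) x
        + pdR 1 (fun y => -ς.1 * ‖ψ ς.1 ς.2.1 ς.2.2 y‖ ^ 2) x
        + pdR 2 (fun y => -ς.2.1 * ‖ψ ς.1 ς.2.1 ς.2.2 y‖ ^ 2) x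
        + pdR 3 (fun y => -ς.2.2 * ‖ψ ς.1 ς.2.1 ς.2.2 y‖ ^ 2) x
      = 2 * ω * ((ψ ς.1 (-ς.2.1) ς.2.2 x + ψ ς.1 ς.2.1 (-ς.2.2) x)
          * conj (ψ ς.1 ς.2.1 ς.2.2 x)).im := fun ς hς => by
    obtain ⟨h₀, h₁, h₂⟩ := mem_signTriples.1 hς
    exact pdR_norm_sq_of_evolution (hdiff ς hς) (heq _ h₀ _ h₁ _ h₂ x hx)
  rw [j0_eq_sum, j1_eq_sum, j2_eq_sum, j3_eq_sum, pdR_sum fun ς hς => (hdiff ς hς).norm_sq ℝ,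
    pdR_sum (hweighted _), pdR_sum (hweighted _), pdR_sum (hweighted _),
    ← Finset.sum_add_distrib, ← Finset.sum_add_distrib, ← Finset.sum_add_distrib,
    Finset.sum_congr rfl hterm, ← Finset.mul_sum, sum_signTriples_im_flip (ψ · · · x), mul_zero]
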